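/- arXiv:1105.2461 — 2 statements merged into one kernel-verified Lean document; each statement's English description precedes it below -/
import Mathlib

section
/- For all positive integers i and j, if u and v are vertices of Fin i × Fin j such that u ≺ v in the snake order and there is no w with u ≺ w ≺ v (i.e., v covers u), then u and v are adjacent in the (i,j)-grid graph G(i,j). -/
/-- The `(i,j)`-grid graph on `Fin i × Fin j`: two vertices are adjacent iff
the L1 distance of their coordinates is `1`. -/
def gridGraph (i j : ℕ) : SimpleGraph (Fin i × Fin j) where
  Adj u v := Nat.dist u.1.1 v.1.1 + Nat.dist u.2.1 v.2.1 = 1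
  symm := ⟨by intro u v h; unfold Nat.dist at *; omega⟩
  loopless := ⟨by intro u h; unfold Nat.dist at h; omega⟩

instance (i j : ℕ) : DecidableRel (gridGraph i j).Adj :=
  fun _ _ => inferInstanceAs (Decidable (_ = 1))

/-- The snake relation on `Fin i × Fin j`. -/
def snakeLE {i j : ℕ} (u v : Fin i × Fin j) : Prop :=
  u.2.1 < v.2.1 ∨ (u.2.1 = v.2.1 ∧
    (u.1.1 = v.1.1 ∨ (u.2.1 % 2 = 0 ∧ u.1.1 < v.1.1) ∨ (u.2.1 % 2 = 1 ∧ v.1.1 < u.1.1)))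

/- The witness is the snake successor of `u = (a, b)`: the next cell of row `b` in the direction
of travel (rightwards for even `b`, leftwards for odd `b`), or `(a, b + 1)` when `u` ends its row. -/
theorem exists_gridGraph_adj_of_snakeLE_of_ne {i j : ℕ} {u v : Fin i × Fin j}
    (huv : snakeLE u v) (hne : u ≠ v) :
    ∃ w, (gridGraph i j).Adj u w ∧ (snakeLE u w ∧ u ≠ w) ∧ snakeLE w v := by
  obtain ⟨⟨a, ha⟩, ⟨b, hb⟩⟩ := u
  obtain ⟨⟨c, hc⟩, ⟨d, hd⟩⟩ := v
  simp only [snakeLE, ne_eq, Prod.mk.injEq, Fin.mk.injEq, not_and] at huv hne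
  simp only [gridGraph, snakeLE, Nat.dist, ne_eq, Prod.exists, Prod.mk.injEq, Fin.exists_iff,
    Fin.mk.injEq]
  rcases Nat.mod_two_eq_zero_or_one b with hb_even | hb_odd
  · by_cases hrow : a + 1 < i
    · exact ⟨a + 1, hrow, b, hb, by omega⟩
    · exact ⟨a, ha, b + 1, by omega, by omega⟩
  · by_cases hrow : 0 < a
    · exact ⟨a - 1, by omega, b, hb, by omega⟩
    · exact ⟨a, ha, b + 1, by omega, by omega⟩

theorem snake_covby_adj_general (i j : ℕ) (u v : Fin i × Fin j)
    (huv : snakeLE u v) (hne : u ≠ v)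
    (hcov : ¬ ∃ w : Fin i × Fin j, (snakeLE u w ∧ u ≠ w) ∧ (snakeLE w v ∧ w ≠ v)) :
    (gridGraph i j).Adj u v := by
  obtain ⟨w, hadj, huw, hwv⟩ := exists_gridGraph_adj_of_snakeLE_of_ne huv hne
  obtain rfl : w = v := by
    by_contra hwv'
    exact hcov ⟨w, huw, hwv, hwv'⟩
  exact hadj

/-- If `v` covers `u` in the snake order, then `u` and `v` are adjacent
in the `(i,j)`-grid graph. -/
theorem snake_covby_adj (i j : ℕ) (hi : 0 < i) (hj : 0 < j) (u v : Fin i × Fin j)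
    (huv : snakeLE u v) (hne : u ≠ v)
    (hcov : ¬ ∃ w : Fin i × Fin j, (snakeLE u w ∧ u ≠ w) ∧ (snakeLE w v ∧ w ≠ v)) :
    (gridGraph i j).Adj u v :=
  snake_covby_adj_general i j u v huv hne hcov
end

section
/- For all integers i ≥ 3 and j ≥ 1, the (i,j)-grid graph G(i,j) has a Hamiltonian path whose first three vertices are (0,0), (1,0), and (2,0) in this order (i.e., the path starts with three consecutive vertices of a borderline). -/
namespace SimpleGraph.Walk

variable {V : Type*} [DecidableEq V] {G : SimpleGraph V} {u v : V}

theorem isHamiltonian_of_support_eq_ofFn {n : ℕ} (e : Fin n ≃ V) {p : G.Walk u v}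
    (hp : p.support = List.ofFn e) : p.IsHamiltonian := by
  intro a
  rw [hp]
  exact List.count_eq_one_of_mem (List.nodup_ofFn.2 e.injective)
    (List.mem_ofFn.2 (e.surjective a))

end SimpleGraph.Walk

theorem Nat.succ_div_mod_cases {i : ℕ} (hi : 0 < i) (k : ℕ) :
    (k + 1) / i = k / i ∧ (k + 1) % i = k % i + 1 ∨
      (k + 1) / i = k / i + 1 ∧ (k + 1) % i = 0 ∧ k % i = i - 1 := by
  have hdiv := Nat.div_add_mod k i
  have hmod := Nat.mod_lt k hi
  by_cases h : k % i + 1 < i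
  · left
    have hk : k + 1 = i * (k / i) + (k % i + 1) := by omega
    rw [hk, Nat.mul_add_div hi, Nat.mul_add_mod, Nat.div_eq_of_lt h, Nat.mod_eq_of_lt h]
    simp
  · right
    have hk : k + 1 = i * (k / i + 1) := by rw [Nat.mul_add_one]; omega
    rw [hk, Nat.mul_div_cancel_left _ hi, Nat.mul_mod_right]
    omega

/-- The `k`-th cell lies in row `k / i`; even rows are traversed left to right, odd rows right
to left. -/
def snake (i j : ℕ) : Fin (j * i) ≃ Fin i × Fin j :=
  finProdFinEquiv.symm.trans <|
    (Equiv.prodShear (Equiv.refl (Fin j)) fun b =>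
      if Even (b : ℕ) then Equiv.refl (Fin i) else Fin.revPerm).trans
      (Equiv.prodComm _ _)

section snake

variable {i j : ℕ}

theorem coe_snake_fst (k : Fin (j * i)) :
    ((snake i j k).1 : ℕ) = if Even (k / i : ℕ) then k % i else i - 1 - k % i := by
  simp only [snake, Equiv.trans_apply, finProdFinEquiv_symm_apply, Equiv.prodShear_apply]
  split_ifs <;> simp_all
  omega

theorem coe_snake_snd (k : Fin (j * i)) : ((snake i j k).2 : ℕ) = k / i := by
  simp [snake]

theorem snake_apply_of_lt (k : Fin (j * i)) (hk : (k : ℕ) < i) :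
    snake i j k = (⟨k, hk⟩, ⟨0, Nat.pos_of_mul_pos_right k.pos⟩) := by
  ext <;> simp [coe_snake_fst, coe_snake_snd, Nat.div_eq_of_lt hk, Nat.mod_eq_of_lt hk]

theorem snake_adj (k : ℕ) (hk : k + 1 < j * i) :
    (gridGraph i j).Adj (snake i j ⟨k, by omega⟩) (snake i j ⟨k + 1, hk⟩) := by
  have hi : 0 < i := Nat.pos_of_mul_pos_left (by omega : 0 < j * i)
  show Nat.dist _ _ + Nat.dist _ _ = 1
  simp only [coe_snake_fst, coe_snake_snd, Nat.dist]
  have hmod := Nat.mod_lt k hi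
  have hmod_succ := Nat.mod_lt (k + 1) hi
  rcases Nat.succ_div_mod_cases hi k with ⟨hdiv, hmod'⟩ | ⟨hdiv, hmod', hlast⟩ <;>
    simp only [hdiv, hmod', Nat.even_add_one] <;> split_ifs <;> omega

end snake

/-- For `i ≥ 3`, the `(i,j)`-grid graph has a Hamiltonian path whose first three
vertices are `(0,0)`, `(1,0)` and `(2,0)` in this order. -/
theorem grid_hamiltonian_path_three_start (i j : ℕ) (hi : 3 ≤ i) (hj : 1 ≤ j) :
    ∃ (v : Fin i × Fin j) (w : (gridGraph i j).Walk (⟨0, by omega⟩, ⟨0, by omega⟩) v),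
      w.IsHamiltonian ∧
      w.support.take 3 =
        [(⟨0, by omega⟩, ⟨0, by omega⟩), (⟨1, by omega⟩, ⟨0, by omega⟩),
         (⟨2, by omega⟩, ⟨0, by omega⟩)] := by
  have hij : 3 ≤ j * i := le_mul_of_one_le_of_le hj hi
  have hne : List.ofFn (snake i j) ≠ [] := by
    rw [Ne, List.ofFn_eq_nil_iff]
    omega
  have hchain : (List.ofFn (snake i j)).IsChain (gridGraph i j).Adj :=
    List.isChain_ofFn.2 snake_adj
  let p := (SimpleGraph.Walk.ofSupport _ hne hchain).copy
    (by rw [List.head_ofFn, snake_apply_of_lt _ (show 0 < i by omega)]) rfl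
  have hp : p.support = List.ofFn (snake i j) := by simp [p]
  refine ⟨_, p, SimpleGraph.Walk.isHamiltonian_of_support_eq_ofFn _ hp, ?_⟩
  rw [hp, ← Fin.ofFn_take_eq_take_ofFn hij]
  simp (disch := simp; omega) [List.ofFn_succ, Fin.take_apply, snake_apply_of_lt]
end
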